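/- Given X ∈ ℝ^{I1×I2×I3} and orthogonal (under T-product) projections via Q1 ∈ ℝ^{I1×K×I3} and Q2 ∈ ℝ^{I2×L×I3} with Q1^T*Q1 = I and Q2^T*Q2 = I, the two-sided approximation error satisfies ‖X − Q1*(Q1^T*X*Q2)*Q2^T‖_F ≤ ‖X − Q1*Q1^T*X‖_F + ‖X − X*Q2*Q2^T‖_F. -/

import Mathlib

open scoped BigOperators

namespace TProd

/-- A third-order tensor given by its frontal slices, indexed cyclically by `ZMod n`. -/
abbrev Tensor (a b n : ℕ) := ZMod n → Matrix (Fin a) (Fin b) ℝ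

/-- The T-product of two third-order tensors (block-circulant construction:
`(X*Y)(k) = ∑ j, X(k−j) ⬝ Y(j)`). -/
noncomputable def tprod {a b c n : ℕ} [NeZero n] (X : Tensor a b n) (Y : Tensor b c n) :
    Tensor a c n :=
  fun k => ∑ j : ZMod n, X (k - j) * Y j

/-- The tensor transpose: transpose each frontal slice and reverse the order of
slices 2 through n. -/
def ttrans {a b n : ℕ} (X : Tensor a b n) : Tensor b a n := fun k => (X (-k)).transpose

/-- The identity tensor: first frontal slice the identity matrix, all others zero. -/
def tid (a n : ℕ) : Tensor a a n := fun k => if k = 0 then 1 else 0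

/-- Squared Frobenius norm of a tensor. -/
def frobSq {a b n : ℕ} [NeZero n] (X : Tensor a b n) : ℝ :=
  ∑ k : ZMod n, ∑ i, ∑ j, (X k i j) ^ 2

/-- Frobenius norm of a tensor. -/
noncomputable def frobNorm {a b n : ℕ} [NeZero n] (X : Tensor a b n) : ℝ :=
  Real.sqrt (frobSq X)

/-- Mode-3 discrete Fourier transform: the i-th Fourier-domain frontal slice. -/
noncomputable def dft {a b n : ℕ} [NeZero n] (X : Tensor a b n) : ZMod n → Matrix (Fin a) (Fin b) ℂ :=
  fun i => ∑ k : ZMod n,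
    Complex.exp (-2 * Real.pi * Complex.I * ((i.val : ℂ) * (k.val : ℂ)) / (n : ℂ)) •
      (X k).map (fun x => (x : ℂ))

/-- A tensor is f-diagonal if all its frontal slices are diagonal matrices. -/
def fDiag {a b n : ℕ} (S : Tensor a b n) : Prop :=
  ∀ k : ZMod n, ∀ i : Fin a, ∀ j : Fin b, (i : ℕ) ≠ (j : ℕ) → S k i j = 0

/-- Orthogonality under the T-product. -/
def Orthogonal {a n : ℕ} [NeZero n] (U : Tensor a a n) : Prop :=
  tprod (ttrans U) U = tid a n ∧ tprod U (ttrans U) = tid a n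

/-- The four tensor Penrose equations: `A` is a Moore–Penrose pseudoinverse of `X`. -/
def IsMP {a b n : ℕ} [NeZero n] (X : Tensor a b n) (A : Tensor b a n) : Prop :=
  tprod (tprod A X) A = A ∧
  tprod (tprod X A) X = X ∧
  ttrans (tprod X A) = tprod X A ∧
  ttrans (tprod A X) = tprod A X

/-- The block-circulant matrix of a tensor. -/
def circ {a b n : ℕ} (X : Tensor a b n) :
    Matrix (ZMod n × Fin a) (ZMod n × Fin b) ℝ :=
  Matrix.of fun p q => X (p.1 - q.1) p.2 q.2

end TProd

open TProd Matrix
open scoped RealInnerProductSpace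

section Aux

variable {a b c d n : ℕ} [NeZero n]

def tinner (X Y : TProd.Tensor a b n) : ℝ :=
  ∑ k : ZMod n, ∑ i, ∑ j, X k i j * Y k i j

lemma ttrans_ttrans (X : Tensor a b n) : ttrans (ttrans X) = X := by
  funext k; simp [ttrans]

set_option linter.unusedSectionVars false

lemma tprod_assoc (A : Tensor a b n) (B : Tensor b c n) (C : Tensor c d n) :
    tprod (tprod A B) C = tprod A (tprod B C) := by
  funext k
  simp only [TProd.tprod, Matrix.sum_mul, Matrix.mul_sum]
  conv_rhs => rw [Finset.sum_comm]
  refine Finset.sum_congr rfl fun u _ => ?_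
  refine Fintype.sum_equiv (Equiv.addLeft u) _ _ fun s => ?_
  rw [Matrix.mul_assoc]
  simp [Equiv.addLeft, sub_add_eq_sub_sub]

lemma tid_tprod (M : Tensor a b n) : tprod (tid a n) M = M := by
  funext k
  simp only [TProd.tprod, tid]
  rw [Finset.sum_eq_single k]
  · simp
  · intro j _ hj
    have h : k - j ≠ 0 := sub_ne_zero.mpr (Ne.symm hj)
    simp [h]
  · simp

lemma tprod_tid (M : Tensor a b n) : tprod M (tid b n) = M := by
  funext k
  simp only [TProd.tprod, tid]
  rw [Finset.sum_eq_single 0]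
  · simp
  · intro j _ hj
    simp [hj]
  · simp

lemma tprod_sub_left (A B : Tensor a b n) (C : Tensor b c n) :
    tprod (A - B) C = tprod A C - tprod B C := by
  funext k
  simp [TProd.tprod, Matrix.sub_mul, Finset.sum_sub_distrib]

lemma tprod_sub_right (A : Tensor a b n) (B C : Tensor b c n) :
    tprod A (B - C) = tprod A B - tprod A C := by
  funext k
  simp [TProd.tprod, Matrix.mul_sub, Finset.sum_sub_distrib]

lemma minner_trace (A B : Matrix (Fin a) (Fin b) ℝ) :
    (∑ i, ∑ j, A i j * B i j) = (Aᵀ * B).trace := by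
  simp [Matrix.trace, Matrix.mul_apply, Matrix.diag]
  rw [Finset.sum_comm]

lemma tinner_tprod_left (A : Tensor a b n) (M : Tensor b c n) (N : Tensor a c n) :
    tinner (tprod A M) N = tinner M (tprod (ttrans A) N) := by
  unfold tinner
  simp only [minner_trace, TProd.tprod, ttrans, Matrix.transpose_sum, Matrix.transpose_mul,
    Matrix.sum_mul, Matrix.mul_sum, Matrix.trace_sum]
  rw [Finset.sum_comm]
  refine Finset.sum_congr rfl fun s _ => ?_
  refine Finset.sum_congr rfl fun k _ => ?_
  rw [Matrix.mul_assoc]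
  congr 2
  simp [neg_sub]

lemma tinner_tprod_right (M : Tensor a b n) (B : Tensor b c n) (N : Tensor a c n) :
    tinner (tprod M B) N = tinner M (tprod N (ttrans B)) := by
  unfold tinner
  simp only [minner_trace, TProd.tprod, ttrans, Matrix.transpose_sum, Matrix.transpose_mul,
    Matrix.sum_mul, Matrix.mul_sum, Matrix.trace_sum]
  rw [Finset.sum_comm]
  conv_rhs => rw [Finset.sum_comm]
  refine Fintype.sum_equiv (Equiv.neg (ZMod n)) _ _ fun s => ?_
  refine Fintype.sum_equiv (Equiv.subRight s) _ _ fun k => ?_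
  simp only [Equiv.neg_apply, Equiv.subRight_apply, neg_neg]
  have hk : k - s - -s = k := by ring
  rw [hk, ← Matrix.mul_assoc, Matrix.trace_mul_cycle, Matrix.trace_mul_cycle]

noncomputable def toE (X : Tensor a b n) : EuclideanSpace ℝ (ZMod n × Fin a × Fin b) :=
  WithLp.toLp 2 (fun p => X p.1 p.2.1 p.2.2)

lemma toE_add (X Y : Tensor a b n) : toE (X + Y) = toE X + toE Y := rfl

lemma frobNorm_eq_norm (X : Tensor a b n) : frobNorm X = ‖toE X‖ := by
  rw [EuclideanSpace.norm_eq, frobNorm]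
  congr 1
  rw [frobSq]
  rw [Fintype.sum_prod_type]
  refine Finset.sum_congr rfl fun k _ => ?_
  rw [Fintype.sum_prod_type]
  refine Finset.sum_congr rfl fun i _ => ?_
  refine Finset.sum_congr rfl fun j _ => ?_
  simp [toE, Real.norm_eq_abs, sq_abs]

lemma inner_toE (X Y : Tensor a b n) : ⟪ toE X, toE Y ⟫ = tinner X Y := by
  rw [PiLp.inner_apply, tinner, Fintype.sum_prod_type]
  refine Finset.sum_congr rfl fun k _ => ?_
  rw [Fintype.sum_prod_type]
  refine Finset.sum_congr rfl fun i _ => ?_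
  refine Finset.sum_congr rfl fun j _ => ?_
  simp [toE, RCLike.inner_apply, mul_comm]

lemma contraction {X Y : Tensor a b n} (h : tinner Y Y = tinner Y X) :
    frobNorm Y ≤ frobNorm X := by
  rw [frobNorm_eq_norm, frobNorm_eq_norm]
  have h1 : ⟪ toE Y, toE Y ⟫ = ⟪ toE Y, toE X ⟫ := by
    rw [inner_toE, inner_toE]; exact h
  have h2 : ⟪ toE Y, toE X ⟫ ≤ ‖toE Y‖ * ‖toE X‖ := real_inner_le_norm _ _
  have h3 : ⟪ toE Y, toE Y ⟫ = ‖toE Y‖ ^ 2 := real_inner_self_eq_norm_sq _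
  have h4 : (0:ℝ) ≤ ‖toE Y‖ := norm_nonneg _
  have h5 : (0:ℝ) ≤ ‖toE X‖ := norm_nonneg _
  nlinarith

end Aux



/-- two-sided projection error bound. -/
theorem two_sided_error (I1 I2 I3 K L : ℕ) [NeZero I3]
    (X : Tensor I1 I2 I3) (Q1 : Tensor I1 K I3) (Q2 : Tensor I2 L I3)
    (hQ1 : tprod (ttrans Q1) Q1 = tid K I3)
    (hQ2 : tprod (ttrans Q2) Q2 = tid L I3) :
    frobNorm (X - tprod (tprod Q1 (tprod (tprod (ttrans Q1) X) Q2)) (ttrans Q2)) ≤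
      frobNorm (X - tprod Q1 (tprod (ttrans Q1) X)) +
      frobNorm (X - tprod (tprod X Q2) (ttrans Q2)) := by
  set P1 : Tensor I1 I2 I3 → Tensor I1 I2 I3 := fun M => tprod Q1 (tprod (ttrans Q1) M) with hP1
  set P2 : Tensor I1 I2 I3 → Tensor I1 I2 I3 := fun M => tprod (tprod M Q2) (ttrans Q2) with hP2
  -- P1 projection identity: tinner (P1 M) (P1 M) = tinner (P1 M) M
  have hproj1 : ∀ M : Tensor I1 I2 I3, tinner (P1 M) (P1 M) = tinner (P1 M) M := by
    intro M
    have e1 : tinner (P1 M) (P1 M)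
        = tinner (tprod (ttrans Q1) M) (tprod (ttrans Q1) M) := by
      rw [hP1]
      rw [tinner_tprod_left, ← tprod_assoc, hQ1, tid_tprod]
    have e2 : tinner (P1 M) M = tinner (tprod (ttrans Q1) M) (tprod (ttrans Q1) M) := by
      rw [hP1, tinner_tprod_left]
    rw [e1, e2]
  -- decomposition
  have hdecomp :
      X - tprod (tprod Q1 (tprod (tprod (ttrans Q1) X) Q2)) (ttrans Q2)
        = (X - P1 X) + P1 (X - P2 X) := by
    have hlin : P1 (X - P2 X) = P1 X - P1 (P2 X) := by
      rw [hP1]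
      simp only
      rw [tprod_sub_right, tprod_sub_right]
    have hassoc : P1 (P2 X)
        = tprod (tprod Q1 (tprod (tprod (ttrans Q1) X) Q2)) (ttrans Q2) := by
      simp only [hP1, hP2, tprod_assoc]
    rw [hlin, hassoc]
    abel
  rw [hdecomp]
  have tri : frobNorm ((X - P1 X) + P1 (X - P2 X))
      ≤ frobNorm (X - P1 X) + frobNorm (P1 (X - P2 X)) := by
    rw [frobNorm_eq_norm, frobNorm_eq_norm, frobNorm_eq_norm, toE_add]
    exact norm_add_le _ _
  have contr : frobNorm (P1 (X - P2 X)) ≤ frobNorm (X - P2 X) :=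
    contraction (hproj1 (X - P2 X))
  calc frobNorm ((X - P1 X) + P1 (X - P2 X))
      ≤ frobNorm (X - P1 X) + frobNorm (P1 (X - P2 X)) := tri
    _ ≤ frobNorm (X - P1 X) + frobNorm (X - P2 X) := by linarith
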